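/- For a permutation σ of size n, let T be the binary search tree obtained by leaf insertions of the letters of σ from left to right. Then for 1 ≤ i ≤ n−1, the (i+1)-st leaf of T (in left-to-right order) is right-oriented if and only if (i, i+1) is a co-inversion of σ, i.e., σ^{-1}(i) > σ^{-1}(i+1). -/

import Mathlib

/-!
Leaf insertion of a word `w` builds a tree that is at the same time a binary search tree, so
that for a permutation its inorder word is `1 … n`, and a heap for the insertion time
`w.idxOf`: every node is inserted before all of its descendants. In any tree, the leaf between
two consecutive inorder nodes `x` and `y` hangs below whichever of them is a descendant of the
other; in a heap that is the one inserted later, and the leaf is right-oriented exactly when it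
hangs below `x`, i.e. when `y` was inserted first.
-/

open scoped Classical

/-- Baxter adjacency relations on words over the alphabet of natural numbers. -/
def BaxterAdj (w w' : List ℕ) : Prop :=
  (∃ (a b c d : ℕ) (u v : List ℕ), a ≤ b ∧ b < c ∧ c ≤ d ∧
      w = c :: (u ++ a :: d :: (v ++ [b])) ∧ w' = c :: (u ++ d :: a :: (v ++ [b]))) ∨
  (∃ (a b c d : ℕ) (u v : List ℕ), a < b ∧ b ≤ c ∧ c < d ∧
      w = b :: (u ++ d :: a :: (v ++ [c])) ∧ w' = b :: (u ++ a :: d :: (v ++ [c])))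

/-- One rewriting step: an adjacency applied inside a word (congruence context). -/
def BaxterStep (w w' : List ℕ) : Prop :=
  ∃ (p s u v : List ℕ), BaxterAdj u v ∧ w = p ++ u ++ s ∧ w' = p ++ v ++ s

/-- The Baxter congruence: the equivalence generated by the Baxter steps. -/
def BaxterEquiv : List ℕ → List ℕ → Prop := Relation.EqvGen BaxterStep

/-- Sylvester adjacency: a c u b ≡ c a u b when a ≤ b < c. -/
def SylvAdj (w w' : List ℕ) : Prop :=
  ∃ (a b c : ℕ) (u : List ℕ), a ≤ b ∧ b < c ∧
    w = a :: c :: (u ++ [b]) ∧ w' = c :: a :: (u ++ [b])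

def SylvStep (w w' : List ℕ) : Prop :=
  ∃ (p s u v : List ℕ), SylvAdj u v ∧ w = p ++ u ++ s ∧ w' = p ++ v ++ s

def SylvEquiv : List ℕ → List ℕ → Prop := Relation.EqvGen SylvStep

/-- #-sylvester adjacency: b u a c ≡ b u c a when a < b ≤ c. -/
def SylvHAdj (w w' : List ℕ) : Prop :=
  ∃ (a b c : ℕ) (u : List ℕ), a < b ∧ b ≤ c ∧
    w = b :: (u ++ [a, c]) ∧ w' = b :: (u ++ [c, a])

def SylvHStep (w w' : List ℕ) : Prop :=
  ∃ (p s u v : List ℕ), SylvHAdj u v ∧ w = p ++ u ++ s ∧ w' = p ++ v ++ s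

def SylvHEquiv : List ℕ → List ℕ → Prop := Relation.EqvGen SylvHStep

/-- The standardized word of `u`: position `i` receives the rank of the letter `u i`
(ties broken from left to right), ranks starting at `1`. -/
def std (u : List ℕ) : List ℕ :=
  (List.range u.length).map fun i =>
    ((List.range u.length).filter fun j =>
      decide (u.getD j 0 < u.getD i 0 ∨ (u.getD j 0 = u.getD i 0 ∧ j < i))).length + 1

/-- The maximal letter of a word. -/
def wordMax (u : List ℕ) : ℕ := u.foldr max 0

/-- The Schützenberger transformation: reverse and complement each letter w.r.t. max + 1. -/
def schutz (u : List ℕ) : List ℕ := u.reverse.map fun x => wordMax u + 1 - x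

/-- Labeled binary trees. -/
inductive BT where
  | leaf : BT
  | node : BT → ℕ → BT → BT
deriving DecidableEq

/-- Leaf insertion into a left binary search tree. -/
def leafInsL : BT → ℕ → BT
  | .leaf, a => .node .leaf a .leaf
  | .node l b r, a => if a < b then .node (leafInsL l a) b r else .node l b (leafInsL r a)

/-- Leaf insertion into a right binary search tree. -/
def leafInsR : BT → ℕ → BT
  | .leaf, a => .node .leaf a .leaf
  | .node l b r, a => if a ≤ b then .node (leafInsR l a) b r else .node l b (leafInsR r a)

/-- The lower restricted tree `T_{≤ a}` of a right binary search tree. -/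
def splitLE : BT → ℕ → BT
  | .leaf, _ => .leaf
  | .node l b r, a => if b ≤ a then .node l b (splitLE r a) else splitLE l a

/-- The higher restricted tree `T_{> a}` of a right binary search tree. -/
def splitGT : BT → ℕ → BT
  | .leaf, _ => .leaf
  | .node l b r, a => if b ≤ a then splitGT r a else .node (splitGT l a) b r

/-- Root insertion into a right binary search tree. -/
def rootIns (t : BT) (a : ℕ) : BT := .node (splitLE t a) a (splitGT t a)

/-- The left tree of the P-symbol: leaf insertions from left to right. -/
def insL (u : List ℕ) : BT := u.foldl leafInsL .leaf

/-- The right tree of the P-symbol: root insertions from left to right. -/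
def insR (u : List ℕ) : BT := u.foldl rootIns .leaf

/-- The P-symbol of a word. -/
def Psymb (u : List ℕ) : BT × BT := (insL u, insR u)

/-- Unlabeled binary trees. -/
inductive UBT where
  | leaf : UBT
  | node : UBT → UBT → UBT
deriving DecidableEq

/-- The shape of a labeled binary tree. -/
def shape : BT → UBT
  | .leaf => .leaf
  | .node l _ r => .node (shape l) (shape r)

/-- The shape of the P-symbol of a word. -/
def Pshape (u : List ℕ) : UBT × UBT := (shape (insL u), shape (insR u))

/-- Number of internal nodes. -/
def sizeU : UBT → ℕ
  | .leaf => 0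
  | .node l r => sizeU l + sizeU r + 1

/-- Orientations of the leaves, from left to right: `true` means right-oriented
(the leaf is the right child of its parent); the parameter is the orientation
assigned if the tree is reduced to a leaf. -/
def loU : UBT → Bool → List Bool
  | .leaf, b => [b]
  | .node l r, _ => loU l false ++ loU r true

/-- Leaf orientations of a labeled binary tree. -/
def loB : BT → Bool → List Bool
  | .leaf, b => [b]
  | .node l _ r, _ => loB l false ++ loB r true

/-- The canopy: orientations of the leaves except the first and the last one. -/
def canU (t : UBT) : List Bool := ((loU t false).drop 1).dropLast

/-- A pair of twin binary trees: same number of nodes and complementary canopies. -/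
def IsTwin (J : UBT × UBT) : Prop :=
  sizeU J.1 = sizeU J.2 ∧ (canU J.1).length = (canU J.2).length ∧
    ∀ i < (canU J.1).length, (canU J.1).getD i false ≠ (canU J.2).getD i false

/-- `σ` is (the word of) a permutation of `{1, …, n}`. -/
def IsPerm (n : ℕ) (σ : List ℕ) : Prop := σ.Perm (List.range' 1 n)

/-- Covering-type step of the right permutohedron (weak) order: exchange of two
adjacent letters `a < b`. -/
def PermutoStep (σ ν : List ℕ) : Prop :=
  ∃ (p s : List ℕ) (a b : ℕ), a < b ∧ σ = p ++ a :: b :: s ∧ ν = p ++ b :: a :: s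

/-- The right permutohedron (weak) order. -/
def PermutoLe : List ℕ → List ℕ → Prop := Relation.ReflTransGen PermutoStep

/-- Baxter permutations: avoiding the generalized patterns 2-41-3 and 3-14-2. -/
def IsBaxterPerm (σ : List ℕ) : Prop :=
  ∀ i j k, i < j → j + 1 < k → k < σ.length →
    ¬(σ.getD (j+1) 0 < σ.getD i 0 ∧ σ.getD i 0 < σ.getD k 0 ∧ σ.getD k 0 < σ.getD j 0) ∧
    ¬(σ.getD j 0 < σ.getD k 0 ∧ σ.getD k 0 < σ.getD i 0 ∧ σ.getD i 0 < σ.getD (j+1) 0)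

def inord : BT → List ℕ
  | .leaf => []
  | .node l b r => inord l ++ b :: inord r

def IsBST : BT → Prop
  | .leaf => True
  | .node l b r =>
    IsBST l ∧ IsBST r ∧ (∀ x ∈ inord l, x < b) ∧ (∀ x ∈ inord r, b ≤ x)

def IsHeap {α : Type*} [Preorder α] (f : ℕ → α) : BT → Prop
  | .leaf => True
  | .node l b r =>
    IsHeap f l ∧ IsHeap f r ∧ (∀ x ∈ inord l, f b < f x) ∧ (∀ x ∈ inord r, f b < f x)

lemma List.getD_mem_of_lt {α : Type*} {l : List α} {i : ℕ} {d : α} (h : i < l.length) :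
    l.getD i d ∈ l := by
  rw [List.getD_eq_getElem _ _ h]
  exact List.getElem_mem h

lemma List.Nodup.pairwise_idxOf_lt {α : Type*} [BEq α] [LawfulBEq α] {l : List α}
    (hl : l.Nodup) :
    l.Pairwise (l.idxOf · < l.idxOf ·) := by
  rw [List.pairwise_iff_getElem]
  intro i j hi hj hij
  rwa [hl.idxOf_getElem, hl.idxOf_getElem]

lemma List.getD_range' (s n i : ℕ) (h : i < n) : (List.range' s n).getD i 0 = s + i := by
  rw [List.getD_eq_getElem _ _ (by simpa using h), List.getElem_range']
  ring

lemma length_loB (t : BT) (c : Bool) : (loB t c).length = (inord t).length + 1 := by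
  induction t generalizing c with
  | leaf => rfl
  | node l b r ihl ihr =>
    simp only [loB, inord, List.length_append, List.length_cons, ihl, ihr]
    omega

lemma getD_loB_zero_of_ne_leaf {t : BT} (ht : t ≠ .leaf) (c : Bool) :
    (loB t c).getD 0 false = false := by
  induction t generalizing c with
  | leaf => contradiction
  | node l b r ihl _ =>
    rw [loB, List.getD_append _ _ _ _ (by rw [length_loB]; omega)]
    cases l with
    | leaf => rfl
    | node => exact ihl BT.noConfusion false

lemma getD_loB_length_of_ne_leaf {t : BT} (ht : t ≠ .leaf) (c : Bool) :
    (loB t c).getD (inord t).length false = true := by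
  induction t generalizing c with
  | leaf => contradiction
  | node l b r _ ihr =>
    rw [loB, List.getD_append_right _ _ _ _ (by simp [length_loB, inord])]
    simp only [inord, length_loB, List.length_append, List.length_cons]
    rw [show (inord l).length + ((inord r).length + 1) - ((inord l).length + 1)
      = (inord r).length by omega]
    cases r with
    | leaf => rfl
    | node => exact ihr BT.noConfusion true

theorem IsHeap.getD_loB_iff {α : Type*} [Preorder α] {f : ℕ → α} {t : BT} (ht : IsHeap f t)
    (c : Bool) {i : ℕ} (hi : 1 ≤ i) (hit : i < (inord t).length) :
    (loB t c).getD i false = true ↔ f ((inord t).getD i 0) < f ((inord t).getD (i - 1) 0) := by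
  induction t generalizing c i with
  | leaf => simp [inord] at hit
  | node l b r ihl ihr =>
    obtain ⟨hl, hr, hlb, hrb⟩ := ht
    have hlen : (loB l false).length = (inord l).length + 1 := length_loB l false
    simp only [inord, List.length_append, List.length_cons] at hit ⊢
    simp only [loB]
    rcases lt_trichotomy i (inord l).length with hil | rfl | hli
    · rw [List.getD_append _ _ _ _ (by omega), List.getD_append _ _ _ _ hil,
        List.getD_append _ _ _ _ (by omega)]
      exact ihl hl false hi hil
    · -- this leaf is the last one of `l`, whose last node is a descendant of `b`
      have hl_ne : l ≠ .leaf := by rintro rfl; simp [inord] at hi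
      rw [List.getD_append _ _ _ _ (by omega), getD_loB_length_of_ne_leaf hl_ne,
        List.getD_append_right _ _ _ _ le_rfl, Nat.sub_self, List.getD_cons_zero,
        List.getD_append _ _ _ _ (by omega)]
      simpa using hlb _ (List.getD_mem_of_lt (l := inord l) (i := (inord l).length - 1) (by omega))
    · obtain ⟨j, rfl⟩ : ∃ j, i = (inord l).length + 1 + j :=
        ⟨i - (inord l).length - 1, by omega⟩
      rw [List.getD_append_right _ _ _ _ (by omega), List.getD_append_right _ _ _ _ (by omega),
        List.getD_append_right _ _ _ _ (by omega), hlen,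
        show (inord l).length + 1 + j - (inord l).length = j + 1 by omega,
        show (inord l).length + 1 + j - 1 - (inord l).length = j by omega,
        show (inord l).length + 1 + j - ((inord l).length + 1) = j by omega]
      cases j with
      | zero =>
        -- this leaf is the first one of `r`, whose first node is a descendant of `b`
        have hr_ne : r ≠ .leaf := by rintro rfl; simp [inord] at hit
        rw [getD_loB_zero_of_ne_leaf hr_ne, List.getD_cons_zero, List.getD_cons_succ]
        simpa using (hrb _ (List.getD_mem_of_lt (l := inord r) (i := 0) (by omega))).not_gt
      | succ j =>
        rw [List.getD_cons_succ, List.getD_cons_succ]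
        exact ihr hr true (by omega) (by omega)

lemma perm_inord_leafInsL (t : BT) (a : ℕ) : (inord (leafInsL t a)).Perm (a :: inord t) := by
  induction t with
  | leaf => rfl
  | node l b r ihl ihr =>
    unfold leafInsL
    split_ifs
    · exact ihl.append_right _
    · refine (ihr.cons b |>.append_left _).trans ?_
      simpa [inord] using List.perm_middle (a := a) (l₁ := inord l ++ [b]) (l₂ := inord r)

lemma mem_inord_leafInsL {t : BT} {a x : ℕ} :
    x ∈ inord (leafInsL t a) ↔ x = a ∨ x ∈ inord t :=
  (perm_inord_leafInsL t a).mem_iff.trans List.mem_cons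

lemma IsBST.leafInsL {t : BT} (ht : IsBST t) (a : ℕ) : IsBST (leafInsL t a) := by
  induction t with
  | leaf => exact ⟨trivial, trivial, by simp [inord], by simp [inord]⟩
  | node l b r ihl ihr =>
    obtain ⟨hl, hr, hlb, hbr⟩ := ht
    unfold _root_.leafInsL
    split_ifs with hab
    · refine ⟨ihl hl, hr, fun x hx => ?_, hbr⟩
      rcases mem_inord_leafInsL.1 hx with rfl | hx
      exacts [hab, hlb x hx]
    · refine ⟨hl, ihr hr, hlb, fun x hx => ?_⟩
      rcases mem_inord_leafInsL.1 hx with rfl | hx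
      exacts [not_lt.1 hab, hbr x hx]

lemma IsHeap.leafInsL {α : Type*} [Preorder α] {f : ℕ → α} {t : BT} (ht : IsHeap f t)
    {a : ℕ} (ha : ∀ x ∈ inord t, f x < f a) : IsHeap f (leafInsL t a) := by
  induction t with
  | leaf => exact ⟨trivial, trivial, by simp [inord], by simp [inord]⟩
  | node l b r ihl ihr =>
    obtain ⟨hl, hr, hlb, hrb⟩ := ht
    simp only [inord, List.mem_append, List.mem_cons] at ha
    unfold _root_.leafInsL
    split_ifs
    · refine ⟨ihl hl fun x hx => ha x (.inl hx), hr, fun x hx => ?_, hrb⟩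
      rcases mem_inord_leafInsL.1 hx with rfl | hx
      exacts [ha b (.inr (.inl rfl)), hlb x hx]
    · refine ⟨hl, ihr hr fun x hx => ha x (.inr (.inr hx)), hlb, fun x hx => ?_⟩
      rcases mem_inord_leafInsL.1 hx with rfl | hx
      exacts [ha b (.inr (.inl rfl)), hrb x hx]

lemma insL_append_singleton (w : List ℕ) (a : ℕ) : insL (w ++ [a]) = leafInsL (insL w) a := by
  simp [insL, List.foldl_append]

lemma perm_inord_insL (w : List ℕ) : (inord (insL w)).Perm w := by
  induction w using List.reverseRecOn with
  | nil => rfl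
  | append_singleton w a ih =>
    rw [insL_append_singleton]
    exact (perm_inord_leafInsL _ a).trans ((ih.cons a).trans (List.perm_append_singleton a w).symm)

lemma isBST_insL (w : List ℕ) : IsBST (insL w) := by
  induction w using List.reverseRecOn with
  | nil => trivial
  | append_singleton w a ih => rw [insL_append_singleton]; exact ih.leafInsL a

lemma isHeap_insL {α : Type*} [Preorder α] {f : ℕ → α} {w : List ℕ}
    (hw : w.Pairwise (f · < f ·)) : IsHeap f (insL w) := by
  induction w using List.reverseRecOn with
  | nil => trivial
  | append_singleton w a ih =>
    obtain ⟨hw, -, hwa⟩ := List.pairwise_append.1 hw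
    rw [insL_append_singleton]
    exact (ih hw).leafInsL fun x hx => hwa x ((perm_inord_insL w).mem_iff.1 hx) a (by simp)

lemma IsBST.pairwise_inord {t : BT} (ht : IsBST t) : (inord t).Pairwise (· ≤ ·) := by
  induction t with
  | leaf => exact List.Pairwise.nil
  | node l b r ihl ihr =>
    obtain ⟨hl, hr, hlb, hbr⟩ := ht
    refine List.pairwise_append.2 ⟨ihl hl, List.pairwise_cons.2 ⟨hbr, ihr hr⟩, ?_⟩
    intro x hx y hy
    rcases List.mem_cons.1 hy with rfl | hy
    exacts [(hlb x hx).le, ((hlb x hx).trans_le (hbr y hy)).le]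

lemma inord_insL_of_isPerm {n : ℕ} {σ : List ℕ} (hσ : IsPerm n σ) :
    inord (insL σ) = List.range' 1 n :=
  ((perm_inord_insL σ).trans hσ).eq_of_pairwise' (isBST_insL σ).pairwise_inord
    ((List.pairwise_lt_range' (s := 1) (n := n)).imp le_of_lt)

/-- for a permutation `σ` of size `n`, the `(i+1)`-st leaf of the
binary search tree obtained by leaf insertions of `σ` from left to right is
right-oriented iff `(i, i+1)` is a co-inversion of `σ`. -/
theorem leaf_orientation_iff_coinversion (n : ℕ) (σ : List ℕ) (hσ : IsPerm n σ) :
    ∀ i, 1 ≤ i → i ≤ n - 1 →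
      ((loB (insL σ) false).getD i false = true ↔ σ.idxOf (i + 1) < σ.idxOf i) := by
  intro i hi hin
  have hinord := inord_insL_of_isPerm hσ
  have hheap : IsHeap σ.idxOf (insL σ) :=
    isHeap_insL (hσ.nodup_iff.2 List.nodup_range').pairwise_idxOf_lt
  have key := hheap.getD_loB_iff false hi (by simp [hinord]; omega)
  rwa [hinord, List.getD_range' _ _ _ (by omega), List.getD_range' _ _ _ (by omega),
    Nat.add_sub_cancel' hi, add_comm 1 i] at key
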